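/- Let k be an algebraically closed field and A a commutative finitely generated k-algebra. Let S ⊆ Spec A be a closed subset, let C_1, …, C_r be irreducible closed subsets of Spec A with C_i ⊄ S for each i, and let Y_1, …, Y_m be irreducible closed subsets of Spec A each of Krull dimension at least 1. Then there exists an element f ∈ A such that f vanishes identically on S (i.e., S ⊆ V(f)), V(f) does not contain any C_i, and V(f) ∩ Y_j ≠ ∅ for every j. (This is the choice of cutting function in the inductive step of the proof of Theorem 3.5 on the existence of enough measuring subvarieties.) -/

import Mathlib

/-!
Pick a point `c i ∈ C i \ S` for each `i`. Since `A` is Jacobson, the closed points of a closed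
set `Y` are dense in it; if there were only finitely many, `Y` would be a finite discrete space of
dimension `0`. Hence each `Y j` contains a closed point `y j` different from all the `c i`. The set
`T = S ∪ {y j}` is closed and misses every `c i`, so prime avoidance applied to the vanishing ideal
of `T` and the finitely many primes `c i` produces `f` vanishing on `T` but at no `c i`.
-/

open PrimeSpectrum

theorem IsClosed.infinite_inter_closedPoints {X : Type*} [TopologicalSpace X] [JacobsonSpace X]
    {Y : Set X} (hY : IsClosed Y) (hdim : 0 < topologicalKrullDim Y) :
    (Y ∩ closedPoints X).Infinite := by
  intro hfin
  have hclosed : IsClosed (Y ∩ closedPoints X) := by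
    rw [← Set.biUnion_of_singleton (Y ∩ closedPoints X)]
    exact hfin.isClosed_biUnion fun y hy => hy.2
  have hY_eq : Y ∩ closedPoints X = Y := by
    rw [← hclosed.closure_eq]
    exact closure_inter_closedPoints hY
  have : DiscreteTopology Y := by
    rw [← isDiscrete_iff_discreteTopology, ← hY_eq]
    exact hfin.isDiscrete_of_subset_closedPoints Set.inter_subset_right
  exact (topologicalKrullDim_zero_of_discreteTopology Y).not_gt hdim

theorem PrimeSpectrum.exists_subset_zeroLocus_disjoint {R : Type*} [CommRing R]
    {T P : Set (PrimeSpectrum R)} (hT : IsClosed T) (hP : P.Finite) (hPT : Disjoint P T) :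
    ∃ f : R, T ⊆ zeroLocus {f} ∧ Disjoint P (zeroLocus {f}) := by
  obtain rfl | ⟨a, -⟩ := P.eq_empty_or_nonempty
  · exact ⟨0, by simp, Set.empty_disjoint _⟩
  have hI : ¬ (vanishingIdeal T : Set R) ⊆ ⋃ p ∈ P, (p.asIdeal : Set R) := by
    rw [Ideal.subset_union_prime_finite hP a a fun p _ _ _ => p.isPrime]
    rintro ⟨p, hp, hle⟩
    have hpT : p ∈ zeroLocus (vanishingIdeal T : Set R) := fun _ hf => hle hf
    rw [zeroLocus_vanishingIdeal_eq_closure, hT.closure_eq] at hpT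
    exact Set.disjoint_left.mp hPT hp hpT
  obtain ⟨f, hfT, hfP⟩ := Set.not_subset.mp hI
  refine ⟨f, fun x hx => ?_, Set.disjoint_left.mpr fun p hp hpf => hfP ?_⟩
  · simpa using (mem_vanishingIdeal T f).mp hfT x hx
  · exact Set.mem_biUnion hp (by simpa using hpf)

theorem exists_cutting_function_general
    (k : Type) [Field k]
    (A : Type) [CommRing A] [Algebra k A] [Algebra.FiniteType k A]
    (S : Set (PrimeSpectrum A)) (hS : IsClosed S)
    (r m : ℕ) (C : Fin r → Set (PrimeSpectrum A)) (Y : Fin m → Set (PrimeSpectrum A))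
    (hCS : ∀ i, ¬ C i ⊆ S)
    (hYclosed : ∀ j, IsClosed (Y j))
    (hYdim : ∀ j, 1 ≤ topologicalKrullDim ↥(Y j)) :
    ∃ f : A, S ⊆ zeroLocus {f} ∧ (∀ i, ¬ C i ⊆ zeroLocus {f}) ∧
      ∀ j, (zeroLocus {f} ∩ Y j).Nonempty := by
  have : IsJacobsonRing A := isJacobsonRing_of_finiteType (A := k)
  choose c hcC hcS using fun i => Set.not_subset.mp (hCS i)
  choose y hy using fun j => ((hYclosed j).infinite_inter_closedPoints
    (zero_lt_one.trans_le (hYdim j))).sdiff (Set.finite_range c) |>.nonempty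
  have hT : IsClosed (S ∪ Set.range y) :=
    hS.union (Set.iUnion_singleton_eq_range y ▸ isClosed_iUnion_of_finite fun j => (hy j).1.2)
  have hcT : Disjoint (Set.range c) (S ∪ Set.range y) := by
    refine Set.disjoint_left.mpr ?_
    rintro _ ⟨i, rfl⟩ (hiS | ⟨j, hji⟩)
    exacts [hcS i hiS, (hy j).2 ⟨i, hji.symm⟩]
  obtain ⟨f, hTf, hcf⟩ := exists_subset_zeroLocus_disjoint hT (Set.finite_range c) hcT
  exact ⟨f, Set.subset_union_left.trans hTf,
    fun i hi => Set.disjoint_left.mp hcf (Set.mem_range_self i) (hi (hcC i)),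
    fun j => ⟨y j, hTf (Or.inr (Set.mem_range_self j)), (hy j).1.1⟩⟩

/-- **Choice of cutting function** (inductive step in the proof of Theorem 3.5). Let `k` be an
algebraically closed field and `A` a finitely generated `k`-algebra. Given a closed subset `S` of
`Spec A`, irreducible closed subsets `C 1, …, C r` none of which is contained in `S`, and
irreducible closed subsets `Y 1, …, Y m` each of Krull dimension at least `1`, there exists
`f ∈ A` vanishing identically on `S`, such that `V(f)` contains no `C i` and `V(f)` meets every
`Y j`. -/
theorem exists_cutting_function
    (k : Type) [Field k] [IsAlgClosed k]
    (A : Type) [CommRing A] [Algebra k A] [Algebra.FiniteType k A]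
    (S : Set (PrimeSpectrum A)) (hS : IsClosed S)
    (r m : ℕ) (C : Fin r → Set (PrimeSpectrum A)) (Y : Fin m → Set (PrimeSpectrum A))
    (hCclosed : ∀ i, IsClosed (C i)) (hCirr : ∀ i, IsIrreducible (C i))
    (hCS : ∀ i, ¬ C i ⊆ S)
    (hYclosed : ∀ j, IsClosed (Y j)) (hYirr : ∀ j, IsIrreducible (Y j))
    (hYdim : ∀ j, 1 ≤ topologicalKrullDim ↥(Y j)) :
    ∃ f : A, S ⊆ zeroLocus {f} ∧ (∀ i, ¬ C i ⊆ zeroLocus {f}) ∧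
      ∀ j, (zeroLocus {f} ∩ Y j).Nonempty :=
  exists_cutting_function_general k A S hS r m C Y hCS hYclosed hYdim
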